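/- For R > 0 define β_{V,W}(R) = sup_η R⁻¹ ∫ W dη, where the supremum is taken over all Borel probability measures η on ℝ^d with ∫ V dη ≤ R. Then lim_{R→+∞} β_{V,W}(R) = 0. -/

import Mathlib

open MeasureTheory Filter Topology Set

noncomputable section

namespace MFG

/-- Points of `ℝ^d`. -/
abbrev Rd (d : ℕ) := Fin d → ℝ

/-- A curve of measures `t ↦ μ_t` on `ℝ^d`. -/
abbrev Curve (d : ℕ) := ℝ → Measure (Rd d)

/-- Euclidean inner product. -/
def dotp {n : ℕ} (a b : Rd n) : ℝ := ∑ i, a i * b i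

/-- Euclidean norm of a vector. -/
def enorm' {n : ℕ} (v : Rd n) : ℝ := Real.sqrt (∑ i, (v i) ^ 2)

/-- Frobenius norm of a matrix. -/
def fnorm {n m : ℕ} (M : Matrix (Fin n) (Fin m) ℝ) : ℝ :=
  Real.sqrt (∑ i, ∑ j, (M i j) ^ 2)

/-- Gradient of a function on `ℝ^d`. -/
def grad {n : ℕ} (ψ : Rd n → ℝ) (x : Rd n) : Rd n :=
  fun i => fderiv ℝ ψ x (Pi.single i 1)

/-- Hessian matrix of a function on `ℝ^d`. -/
def hess {n : ℕ} (ψ : Rd n → ℝ) (x : Rd n) : Matrix (Fin n) (Fin n) ℝ :=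
  Matrix.of fun i j => fderiv ℝ (fun y => fderiv ℝ ψ y (Pi.single j 1)) x (Pi.single i 1)

/-- Test functions: `ψ ∈ C_0^∞(ℝ^d)`. -/
def IsTest {n : ℕ} (ψ : Rd n → ℝ) : Prop := ContDiff ℝ (⊤ : ℕ∞) ψ ∧ HasCompactSupport ψ

/-- Legendre transform `h*(v) = sup_{p ≥ 0} (p v - h p)`. -/
def legendre (hfun : ℝ → ℝ) (v : ℝ) : ℝ := ⨆ p : Ici (0:ℝ), ((p : ℝ) * v - hfun (p : ℝ))

/-- The inverse function of an increasing function `h : [0,∞) → [0,∞)`. -/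
def hinv (hfun : ℝ → ℝ) (y : ℝ) : ℝ := sInf {v : ℝ | 0 ≤ v ∧ y ≤ hfun v}

variable {d d₁ : ℕ}

/-- A family `(μ_t)_{t ∈ [0,T]}` of Borel probability measures, Borel in `t` and
continuous with respect to the weak topology. -/
def IsMeasCurve (T : ℝ) (μ : Curve d) : Prop :=
  (∀ t ∈ Icc (0:ℝ) T, IsProbabilityMeasure (μ t)) ∧
  (∀ E : Set (Rd d), MeasurableSet E → Measurable fun t => μ t E) ∧
  (∀ φ : Rd d → ℝ, Continuous φ → (∃ K, ∀ x, |φ x| ≤ K) →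
      ContinuousOn (fun t => ∫ x, φ x ∂ μ t) (Icc (0:ℝ) T))

/-- The class `M(V)`. -/
def MemMV (T : ℝ) (V : Rd d → ℝ) (μ : Curve d) : Prop :=
  IsMeasCurve T μ ∧ (∀ t ∈ Icc (0:ℝ) T, Integrable V (μ t)) ∧
    ∃ C : ℝ, ∀ t ∈ Icc (0:ℝ) T, ∫ x, V x ∂ μ t ≤ C

/-- The class `M_{R,M}(V)`. -/
def MemMRM (T : ℝ) (V : Rd d → ℝ) (R M : ℝ) (μ : Curve d) : Prop :=
  MemMV T V μ ∧ ∀ t ∈ Icc (0:ℝ) T, ∫ x, V x ∂ μ t ≤ R * Real.exp (M * t)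

/-- `sup_{t ∈ [0,T]} ∫ W dμ_t`. -/
def supInt (T : ℝ) (W : Rd d → ℝ) (μ : Curve d) : ℝ :=
  ⨆ t : Icc (0:ℝ) T, ∫ x, W x ∂ μ (t : ℝ)

/-- `V`-weak convergence of a sequence of curves of measures. -/
def VWeakConv (T : ℝ) (V : Rd d → ℝ) (μn : ℕ → Curve d) (μ : Curve d) : Prop :=
  ∀ t ∈ Icc (0:ℝ) T, ∀ ζ : Rd d → ℝ, Continuous ζ →
    Tendsto (fun x => ζ x / V x) (cocompact (Rd d)) (𝓝 0) →
    Tendsto (fun n => ∫ x, ζ x ∂ (μn n t)) atTop (𝓝 (∫ x, ζ x ∂ μ t))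

/-- Weak convergence of a sequence of bounded measures: convergence of the
integrals of all bounded continuous functions. -/
def WeakLim {α : Type*} [TopologicalSpace α] [MeasurableSpace α]
    (Pn : ℕ → Measure α) (P : Measure α) : Prop :=
  ∀ φ : α → ℝ, Continuous φ → (∃ K, ∀ a, |φ a| ≤ K) →
    Tendsto (fun n => ∫ a, φ a ∂ (Pn n)) atTop (𝓝 (∫ a, φ a ∂ P))

/-- The measure `μ_t dt` on `ℝ^d × [0,T]` associated with a curve `t ↦ μ_t`. -/
def curveMeasure (T : ℝ) (μ : Curve d) : Measure (Rd d × ℝ) :=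
  Measure.bind (volume.restrict (Icc (0:ℝ) T)) (fun t => (μ t).map (fun x => (x, t)))

/-- A family `ω = {ω_ψ}` of moduli of continuity indexed by test functions. -/
def IsModulus (T : ℝ) (Ω : (Rd d → ℝ) → ℝ → ℝ) : Prop :=
  ∀ ψ : Rd d → ℝ, IsTest ψ →
    ContinuousOn (Ω ψ) (Icc (0:ℝ) T) ∧ MonotoneOn (Ω ψ) (Icc (0:ℝ) T) ∧ Ω ψ 0 = 0

/-- The class `M_{R,M}^ω(V)`. -/
def MemMRMom (T : ℝ) (V : Rd d → ℝ) (R M : ℝ) (Ω : (Rd d → ℝ) → ℝ → ℝ) (μ : Curve d) : Prop :=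
  MemMRM T V R M μ ∧ ∀ ψ : Rd d → ℝ, IsTest ψ → ∀ s ∈ Icc (0:ℝ) T, ∀ t ∈ Icc (0:ℝ) T,
    |(∫ x, ψ x ∂ μ t) - ∫ x, ψ x ∂ μ s| ≤ Ω ψ |t - s|

/-- The coefficients `A(x,t,μ)`, `b(x,t,μ)`, `Q(x,t,μ)` of the mean field game,
given for every curve of measures `μ`. -/
structure Coeffs (d d₁ : ℕ) where
  A : Rd d → ℝ → Curve d → Matrix (Fin d) (Fin d) ℝ
  b : Rd d → ℝ → Curve d → Rd d
  Q : Rd d → ℝ → Curve d → Matrix (Fin d) (Fin d₁) ℝ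

/-- The operator `L_μ ψ(x,t) = tr(A(x,t,μ) D²ψ(x)) + ⟨b(x,t,μ), ∇ψ(x)⟩`. -/
def Lop (c : Coeffs d d₁) (σ : Curve d) (ψ : Rd d → ℝ) (x : Rd d) (t : ℝ) : ℝ :=
  Matrix.trace (c.A x t σ * hess ψ x) + dotp (c.b x t σ) (grad ψ x)

/-- The operator `L_{μ,u} ψ = L_μ ψ + ⟨Q(x,t,μ) u, ∇ψ(x)⟩`. -/
def LopU (c : Coeffs d d₁) (σ : Curve d) (u : Rd d₁) (ψ : Rd d → ℝ) (x : Rd d) (t : ℝ) : ℝ :=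
  Lop c σ ψ x t + dotp ((c.Q x t σ).mulVec u) (grad ψ x)

/-- The basic data of the mean field game: the time horizon `T`, the Lyapunov
function `V`, the function `W`, the cost gauge `h` and the control set `U`. -/
structure Setting (d d₁ : ℕ) where
  T : ℝ
  V : Rd d → ℝ
  W : Rd d → ℝ
  hf : ℝ → ℝ
  U : Set (Rd d₁)
  hT : 0 < T
  hVC2 : ContDiff ℝ 2 V
  hV0 : ∀ x, 0 ≤ V x
  hVinf : Tendsto V (cocompact (Rd d)) atTop
  hWcont : Continuous W
  hW0 : ∀ x, 0 ≤ W x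
  hWV : ∀ x, W x ≤ V x
  hWlim : Tendsto (fun x => W x / V x) (cocompact (Rd d)) (𝓝 0)
  hh0 : hf 0 = 0
  hhconv : ConvexOn ℝ (Ici (0:ℝ)) hf
  hhmono : StrictMonoOn hf (Ici (0:ℝ))
  hhcont : ContinuousOn hf (Ici (0:ℝ))
  hhsuper : Tendsto (fun v => hf v / v) atTop atTop
  hUne : U.Nonempty
  hUclosed : IsClosed U
  hUconv : Convex ℝ U

/-- Condition (H1.1): local boundedness of the coefficients, uniformly over `M_R(V)`. -/
def H11 (S : Setting d d₁) (c : Coeffs d d₁) : Prop :=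
  ∀ (x₀ : Rd d) (r : ℝ), ∀ R > (0:ℝ), ∃ K : ℝ,
    ∀ x ∈ Metric.ball x₀ r, ∀ t ∈ Icc (0:ℝ) S.T, ∀ μ : Curve d, MemMRM S.T S.V R 0 μ →
      (∀ i j, |c.A x t μ i j| ≤ K) ∧ (∀ i, |c.b x t μ i| ≤ K) ∧ (∀ i m, |c.Q x t μ i m| ≤ K)

/-- Condition (H1.2): continuity of the coefficients in `x`. -/
def H12 (S : Setting d d₁) (c : Coeffs d d₁) : Prop :=
  ∀ μ : Curve d, MemMV S.T S.V μ → ∀ t ∈ Icc (0:ℝ) S.T,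
    (∀ i j, Continuous fun x => c.A x t μ i j) ∧
    (∀ i, Continuous fun x => c.b x t μ i) ∧
    (∀ i m, Continuous fun x => c.Q x t μ i m)

/-- The coefficients are Borel functions of `(x,t)`. -/
def HMeasCoeffs (S : Setting d d₁) (c : Coeffs d d₁) : Prop :=
  ∀ μ : Curve d, MemMV S.T S.V μ →
    (∀ i j, Measurable fun p : Rd d × ℝ => c.A p.1 p.2 μ i j) ∧
    (∀ i, Measurable fun p : Rd d × ℝ => c.b p.1 p.2 μ i) ∧
    (∀ i m, Measurable fun p : Rd d × ℝ => c.Q p.1 p.2 μ i m)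

/-- Condition (H1.3): uniform-on-balls continuity of the coefficients with respect to
`V`-weak convergence. -/
def H13 (S : Setting d d₁) (c : Coeffs d d₁) : Prop :=
  ∀ (x₀ : Rd d) (r : ℝ), ∀ t ∈ Icc (0:ℝ) S.T, ∀ R > (0:ℝ),
    ∀ (μn : ℕ → Curve d) (μ : Curve d),
      (∀ n, MemMRM S.T S.V R 0 (μn n)) → MemMRM S.T S.V R 0 μ → VWeakConv S.T S.V μn μ →
      ∀ ε > (0:ℝ), ∃ N : ℕ, ∀ n ≥ N, ∀ x ∈ Metric.ball x₀ r,
        (∀ i j, |c.A x t (μn n) i j - c.A x t μ i j| < ε) ∧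
        (∀ i, |c.b x t (μn n) i - c.b x t μ i| < ε) ∧
        (∀ i m, |c.Q x t (μn n) i m - c.Q x t μ i m| < ε)

/-- Condition (H1). -/
def H1 (S : Setting d d₁) (c : Coeffs d d₁) : Prop :=
  H11 S c ∧ H12 S c ∧ H13 S c ∧ HMeasCoeffs S c

/-- Condition (H2.1): the Lyapunov estimate with constant `C_L`. -/
def H21 (S : Setting d d₁) (c : Coeffs d d₁) (CL : ℝ) : Prop :=
  0 < CL ∧ ∀ μ : Curve d, MemMV S.T S.V μ → ∀ x : Rd d, ∀ t ∈ Icc (0:ℝ) S.T,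
    Lop c μ S.V x t + legendre S.hf (enorm' ((c.Q x t μ).transpose.mulVec (grad S.V x)))
      ≤ CL * S.V x + CL * (∫ y, S.V y ∂ μ t) + CL * supInt S.T S.W μ

/-- The square root of a positive semidefinite matrix (the former `Matrix.PosSemidef.sqrt`). -/
def psdSqrt {n : ℕ} {A : Matrix (Fin n) (Fin n) ℝ} (hA : A.PosSemidef) : Matrix (Fin n) (Fin n) ℝ :=
  hA.1.eigenvectorUnitary.1 * Matrix.diagonal ((↑) ∘ Real.sqrt ∘ hA.1.eigenvalues) *
  (star hA.1.eigenvectorUnitary : Matrix (Fin n) (Fin n) ℝ)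

/-- Conditions (H2.2) and (H2.3): monotonicity/Lipschitz-type bounds and `V`-growth
bounds on `A`, `b`, `Q` and `Θ`. -/
def H2b (S : Setting d d₁) (c : Coeffs d d₁)
    (hApsd : ∀ (x : Rd d) (t : ℝ) (μ : Curve d), (c.A x t μ).PosSemidef) : Prop :=
  ∀ μ : Curve d, MemMV S.T S.V μ → ∃ C₁ > (0:ℝ), ∃ C₂ > (0:ℝ), ∃ Θ : Rd d → ℝ → ℝ,
    (∀ x t, 0 ≤ Θ x t) ∧ (Measurable fun p : Rd d × ℝ => Θ p.1 p.2) ∧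
    (∀ x y : Rd d, ∀ t ∈ Icc (0:ℝ) S.T,
      Matrix.trace ((psdSqrt (hApsd x t μ) - psdSqrt (hApsd y t μ)) *
          (psdSqrt (hApsd x t μ) - psdSqrt (hApsd y t μ))) + dotp (c.b x t μ - c.b y t μ) (x - y)
        ≤ C₁ * (1 + S.V x + S.V y) * (enorm' (x - y)) ^ 2) ∧
    (∀ x y : Rd d, ∀ t ∈ Icc (0:ℝ) S.T,
      fnorm (c.Q x t μ - c.Q y t μ) ≤ (Θ x t + Θ y t) * enorm' (x - y)) ∧
    (∀ x : Rd d, ∀ t ∈ Icc (0:ℝ) S.T,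
      fnorm (c.A x t μ) + enorm' (c.b x t μ) + legendre S.hf (fnorm (c.Q x t μ)) +
          legendre S.hf (Θ x t) ≤ C₂ * S.V x)

/-- Condition (H3.1): continuity and growth of `g`, with constant `C_g`. -/
def H31 (S : Setting d d₁) (g : Rd d → Curve d → ℝ) (Cg : ℝ) : Prop :=
  0 < Cg ∧ ∀ μ : Curve d, MemMV S.T S.V μ →
    (Continuous fun x => g x μ) ∧ ∀ x, |g x μ| ≤ Cg * (S.W x + supInt S.T S.W μ)

/-- Condition (H3.2): two-sided growth bound on `f`, with constants `C_h > 1`, `C_f > 0`. -/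
def H32 (S : Setting d d₁) (f : Rd d₁ → Rd d → ℝ → Curve d → ℝ) (Ch Cf : ℝ) : Prop :=
  1 < Ch ∧ 0 < Cf ∧ ∀ μ : Curve d, MemMV S.T S.V μ → ∀ (u : Rd d₁) (x : Rd d),
    ∀ t ∈ Icc (0:ℝ) S.T,
      S.hf (enorm' u) - Cf * (S.W x + supInt S.T S.W μ) ≤ f u x t μ ∧
      f u x t μ ≤ Ch * S.hf (enorm' u) + Cf * (S.W x + supInt S.T S.W μ)

/-- Condition (H3.3): stability of `f` and `g` under `V`-weak convergence, uniformly on balls. -/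
def H33 (S : Setting d d₁) (f : Rd d₁ → Rd d → ℝ → Curve d → ℝ) (g : Rd d → Curve d → ℝ) :
    Prop :=
  ∀ (x₀ : Rd d) (r : ℝ) (u₀ : Rd d₁) (r₁ : ℝ), ∀ R > (0:ℝ), ∀ M ≥ (0:ℝ),
    ∀ (μn : ℕ → Curve d) (μ : Curve d),
      (∀ n, MemMRM S.T S.V R M (μn n)) → MemMRM S.T S.V R M μ → VWeakConv S.T S.V μn μ →
      (∀ ε > (0:ℝ), ∃ N : ℕ, ∀ n ≥ N, ∀ x ∈ Metric.ball x₀ r, |g x (μn n) - g x μ| < ε) ∧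
      (∀ t ∈ Icc (0:ℝ) S.T, ∀ ε > (0:ℝ), ∃ N : ℕ, ∀ n ≥ N, ∀ x ∈ Metric.ball x₀ r,
        ∀ u ∈ Metric.ball u₀ r₁ ∩ S.U, |f u x t (μn n) - f u x t μ| < ε)

/-- Condition (H3.4): convexity of `f` in `u` and joint continuity in `(u,x)`. -/
def H34 (S : Setting d d₁) (f : Rd d₁ → Rd d → ℝ → Curve d → ℝ) : Prop :=
  ∀ μ : Curve d, MemMV S.T S.V μ → ∀ t ∈ Icc (0:ℝ) S.T,
    (∀ x : Rd d, ConvexOn ℝ S.U fun u => f u x t μ) ∧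
    ContinuousOn (fun p : Rd d₁ × Rd d => f p.1 p.2 t μ) (S.U ×ˢ (univ : Set (Rd d)))

/-- `f` and `g` are Borel functions. -/
def HMeasfg (S : Setting d d₁) (f : Rd d₁ → Rd d → ℝ → Curve d → ℝ)
    (g : Rd d → Curve d → ℝ) : Prop :=
  ∀ μ : Curve d, MemMV S.T S.V μ →
    (Measurable fun p : Rd d₁ × Rd d × ℝ => f p.1 p.2.1 p.2.2 μ) ∧ (Measurable fun x => g x μ)

/-- Condition (H3). -/
def H3 (S : Setting d d₁) (f : Rd d₁ → Rd d → ℝ → Curve d → ℝ) (g : Rd d → Curve d → ℝ)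
    (Ch Cf Cg : ℝ) : Prop :=
  H31 S g Cg ∧ H32 S f Ch Cf ∧ H33 S f g ∧ H34 S f ∧ HMeasfg S f g

/-- `μ = μ_t dt` is a probability solution of the Cauchy problem
`∂_t μ_t = L*_{σ,u(x,t)} μ_t`, `μ_0 = ν`. -/
def SolvesFPK (S : Setting d d₁) (c : Coeffs d d₁) (σ : Curve d)
    (u : Rd d → ℝ → Rd d₁) (ν : Measure (Rd d)) (μ : Curve d) : Prop :=
  IsMeasCurve S.T μ ∧ μ 0 = ν ∧
  ∀ ψ : Rd d → ℝ, IsTest ψ → ∀ t ∈ Icc (0:ℝ) S.T,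
    (∀ s ∈ Icc (0:ℝ) S.T, Integrable (fun x => LopU c σ (u x s) ψ x s) (μ s)) ∧
    IntervalIntegrable (fun s => ∫ x, LopU c σ (u x s) ψ x s ∂ μ s) volume 0 t ∧
    (∫ x, ψ x ∂ μ t) - (∫ x, ψ x ∂ ν) = ∫ s in (0:ℝ)..t, ∫ x, LopU c σ (u x s) ψ x s ∂ μ s

/-- The space `U × ℝ^d × [0,T]` on which the relaxed controls live. -/
abbrev PSpace (d d₁ : ℕ) := Rd d₁ × Rd d × ℝ

/-- The class `P_R` (with `M = 5 C_L` and `γ = e^{-C_L T}/4`). -/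
def MemPR (S : Setting d d₁) (CL R : ℝ) (P : Measure (PSpace d d₁)) : Prop :=
  P univ = ENNReal.ofReal S.T ∧
  P {p : PSpace d d₁ | ¬(p.1 ∈ S.U ∧ p.2.2 ∈ Icc (0:ℝ) S.T)} = 0 ∧
  (∀ t ∈ Icc (0:ℝ) S.T,
    (∫⁻ p in {p : PSpace d d₁ | p.2.2 ≤ t}, ENNReal.ofReal (S.V p.2.1) ∂P)
      ≤ ENNReal.ofReal (R * Real.exp (5 * CL * t))) ∧
  (∫⁻ p, ENNReal.ofReal (S.hf (enorm' p.1)) ∂P) ≤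
    ENNReal.ofReal (Real.exp (-(CL * S.T)) / 4 * R)

/-- `P ∈ S_R(σ)` with the explicit curve `μ = μ_t dt` as its `(x,t)`-projection. -/
def MemSRwith (S : Setting d d₁) (c : Coeffs d d₁) (CL : ℝ) (ν : Measure (Rd d)) (R : ℝ)
    (σ : Curve d) (P : Measure (PSpace d d₁)) (μ : Curve d) : Prop :=
  MemPR S CL R P ∧ IsMeasCurve S.T μ ∧ μ 0 = ν ∧
  P.map (fun p : PSpace d d₁ => (p.2.1, p.2.2)) = curveMeasure S.T μ ∧
  ∀ ψ : Rd d → ℝ, IsTest ψ → ∀ t ∈ Icc (0:ℝ) S.T,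
    Integrable (fun p : PSpace d d₁ => LopU c σ p.1 ψ p.2.1 p.2.2)
      (P.restrict {p : PSpace d d₁ | p.2.2 ≤ t}) ∧
    (∫ x, ψ x ∂ μ t) = (∫ x, ψ x ∂ ν) +
      ∫ p in {p : PSpace d d₁ | p.2.2 ≤ t}, LopU c σ p.1 ψ p.2.1 p.2.2 ∂P

/-- The class `S_R(σ)`. -/
def MemSR (S : Setting d d₁) (c : Coeffs d d₁) (CL : ℝ) (ν : Measure (Rd d)) (R : ℝ)
    (σ : Curve d) (P : Measure (PSpace d d₁)) : Prop :=
  ∃ μ : Curve d, MemSRwith S c CL ν R σ P μ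

/-- The measure `δ_{u(x,t)}(du) μ_t(dx) dt` on `U × ℝ^d × [0,T]`. -/
def diracCtrl (S : Setting d d₁) (u : Rd d → ℝ → Rd d₁) (μ : Curve d) :
    Measure (PSpace d d₁) :=
  (curveMeasure S.T μ).map (fun q : Rd d × ℝ => (u q.1 q.2, q.1, q.2))

/-- The cost functional `F_θ(Γ) = ∫ f(u,x,t,θ) dΓ + ∫ g(x,θ) dη_T`, where `η_t dt`
is the `(x,t)`-projection of `Γ`, given by the curve `η`. -/
def Ffun (S : Setting d d₁) (f : Rd d₁ → Rd d → ℝ → Curve d → ℝ) (g : Rd d → Curve d → ℝ)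
    (θ : Curve d) (P : Measure (PSpace d d₁)) (η : Curve d) : ℝ :=
  (∫ p : PSpace d d₁, f p.1 p.2.1 p.2.2 θ ∂P) + ∫ x, g x θ ∂ η S.T


/-- Remark 3.2: with `β_{V,W}(R) = sup { R⁻¹ ∫ W dη : η a Borel probability measure with
`∫ V dη ≤ R` }` one has `β_{V,W}(R) → 0` as `R → +∞`. -/
theorem beta_tendsto_zero {d : ℕ}
    (V W : Rd d → ℝ) (hVcont : Continuous V) (hV0 : ∀ x, 0 ≤ V x)
    (hVinf : Tendsto V (cocompact (Rd d)) atTop)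
    (hWcont : Continuous W) (hW0 : ∀ x, 0 ≤ W x) (hWV : ∀ x, W x ≤ V x)
    (hWlim : Tendsto (fun x => W x / V x) (cocompact (Rd d)) (𝓝 0)) :
    Tendsto (fun R : ℝ => sSup {y : ℝ | ∃ η : Measure (Rd d), IsProbabilityMeasure η ∧
        Integrable V η ∧ (∫ x, V x ∂η) ≤ R ∧ y = R⁻¹ * ∫ x, W x ∂η}) atTop (𝓝 0) := by
  rw [Metric.tendsto_nhds]
  intro ε hε
  have h1 : ∀ᶠ x in cocompact (Rd d), W x / V x < ε / 4 :=
    hWlim.eventually (gt_mem_nhds (by positivity))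
  have h2 : ∀ᶠ x in cocompact (Rd d), (1 : ℝ) ≤ V x := hVinf.eventually_ge_atTop 1
  obtain ⟨K, hK, hKsub⟩ := mem_cocompact.mp (h1.and h2)
  obtain ⟨C, hC⟩ := (hK.image hWcont).bddAbove
  set C' := max C 0 with hC'def
  have hC'0 : (0 : ℝ) ≤ C' := le_max_right _ _
  have hbound : ∀ x, W x ≤ ε / 4 * V x + C' := by
    intro x
    by_cases hx : x ∈ K
    · have hWC : W x ≤ C := hC ⟨x, hx, rfl⟩
      have := hV0 x
      have : W x ≤ C' := le_trans hWC (le_max_left _ _)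
      nlinarith [hV0 x]
    · have hx' : W x / V x < ε / 4 ∧ (1 : ℝ) ≤ V x := hKsub hx
      have hVpos : (0 : ℝ) < V x := lt_of_lt_of_le one_pos hx'.2
      have : W x < ε / 4 * V x := by
        have := (div_lt_iff₀ hVpos).mp hx'.1
        linarith
      linarith
  filter_upwards [eventually_ge_atTop (max 1 (4 * C' / ε))] with R hR
  have hR1 : (1 : ℝ) ≤ R := le_trans (le_max_left _ _) hR
  have hRpos : (0 : ℝ) < R := lt_of_lt_of_le one_pos hR1
  have h4C : 4 * C' ≤ R * ε := by
    have h := le_trans (le_max_right 1 (4 * C' / ε)) hR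
    have := (div_le_iff₀ hε).mp h
    linarith
  have hCR : C' / R ≤ ε / 4 := by
    rw [div_le_iff₀ hRpos]
    nlinarith
  have hub : ∀ y ∈ {y : ℝ | ∃ η : Measure (Rd d), IsProbabilityMeasure η ∧
      Integrable V η ∧ (∫ x, V x ∂η) ≤ R ∧ y = R⁻¹ * ∫ x, W x ∂η}, y ≤ ε / 2 := by
    rintro y ⟨η, hηp, hVint, hVle, rfl⟩
    haveI := hηp
    have hint : Integrable (fun x => ε / 4 * V x + C') η :=
      (hVint.const_mul (ε / 4)).add (integrable_const C')
    have hWint : Integrable W η := by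
      refine hint.mono' hWcont.aestronglyMeasurable ?_
      filter_upwards with x
      rw [Real.norm_eq_abs, abs_of_nonneg (hW0 x)]
      exact hbound x
    have hWle : ∫ x, W x ∂η ≤ ε / 4 * R + C' := by
      calc ∫ x, W x ∂η ≤ ∫ x, (ε / 4 * V x + C') ∂η :=
            integral_mono hWint hint hbound
        _ = ε / 4 * (∫ x, V x ∂η) + C' := by
            rw [integral_add (hVint.const_mul (ε / 4)) (integrable_const C'),
              MeasureTheory.integral_const_mul, integral_const, probReal_univ]
            simp
        _ ≤ ε / 4 * R + C' := by nlinarith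
    calc R⁻¹ * ∫ x, W x ∂η ≤ R⁻¹ * (ε / 4 * R + C') :=
          mul_le_mul_of_nonneg_left hWle (inv_nonneg.mpr hRpos.le)
      _ = ε / 4 + C' / R := by field_simp
      _ ≤ ε / 2 := by linarith
  have hnn : ∀ y ∈ {y : ℝ | ∃ η : Measure (Rd d), IsProbabilityMeasure η ∧
      Integrable V η ∧ (∫ x, V x ∂η) ≤ R ∧ y = R⁻¹ * ∫ x, W x ∂η}, 0 ≤ y := by
    rintro y ⟨η, hηp, hVint, hVle, rfl⟩
    exact mul_nonneg (inv_nonneg.mpr hRpos.le) (integral_nonneg hW0)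
  have hsup_le : sSup {y : ℝ | ∃ η : Measure (Rd d), IsProbabilityMeasure η ∧
      Integrable V η ∧ (∫ x, V x ∂η) ≤ R ∧ y = R⁻¹ * ∫ x, W x ∂η} ≤ ε / 2 :=
    Real.sSup_le hub (by linarith)
  have hsup_nn : 0 ≤ sSup {y : ℝ | ∃ η : Measure (Rd d), IsProbabilityMeasure η ∧
      Integrable V η ∧ (∫ x, V x ∂η) ≤ R ∧ y = R⁻¹ * ∫ x, W x ∂η} :=
    Real.sSup_nonneg hnn
  rw [Real.dist_eq, sub_zero, abs_of_nonneg hsup_nn]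
  linarith

end MFG
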